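/- arXiv:2304.05771 — 3 statements merged into one kernel-verified Lean document; each statement's English description precedes it below -/
import Mathlib

section
/- Let μ be the law of a random environment f : ℤ² → ℝ, and suppose μ is invariant under the sign-reversing reflection f ↦ ((x,y) ↦ −f(−x,y)). Then for every δ ∈ [0,1/2], the random walk (X_n)_{n≥0} in the environment f with bias δ satisfies: the processes (X_n)_{n≥0} and (−X_n)_{n≥0} have the same distribution under the annealed law ℙ. -/
open MeasureTheory ProbabilityTheory

noncomputable section

/-- The sign function: 1 if positive, -1 if negative, 0 if zero. -/
def sgn (t : ℝ) : ℝ := if 0 < t then 1 else if t < 0 then -1 else 0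

/-- The random walk in the environment `f` with bias `δ`, driven by the field `u` of
uniform variables. -/
def walk (f u : ℤ × ℤ → ℝ) (δ : ℝ) : ℕ → ℤ
  | 0 => 0
  | n + 1 =>
      let x := walk f u δ n
      if 1 / 2 - δ * sgn (f (x, (n : ℤ))) ≤ u (x, (n : ℤ)) then x + 1 else x - 1

/-- Invariance under the sign-reversing reflection `f ↦ ((x,y) ↦ -f(-x,y))`. -/
def SignReversingReflectionInvariant (μ : Measure ((ℤ × ℤ) → ℝ)) : Prop :=
  Measure.map (fun f (z : ℤ × ℤ) => -f (-z.1, z.2)) μ = μ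

/-!
Reflect the environment by `f ↦ ((x, y) ↦ -f (-x, y))` and the uniform field by
`u ↦ ((x, y) ↦ 1 - u (-x, y))`. Pathwise, the walk driven by the reflected pair is exactly `-X`,
unless some uniform equals one of the thresholds `1/2 - δ * sgn t`, which is a null event. The
reflected pair has the same joint law as the original one: the two components are independent,
`μ` is invariant by hypothesis, and the law of an i.i.d. uniform field is invariant under
reindexing by `(x, y) ↦ (-x, y)` and under `u ↦ 1 - u`.
-/

lemma sgn_neg (a : ℝ) : sgn (-a) = -sgn a := by
  unfold sgn
  rcases lt_trichotomy a 0 with h | rfl | h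
  · simp [h, h.not_gt]
  · simp
  · simp [h, h.not_gt]

lemma finite_range_sgn : (Set.range sgn).Finite :=
  (Set.toFinite {-1, 0, 1}).subset <| by
    rintro _ ⟨t, rfl⟩
    unfold sgn
    split_ifs <;> simp

@[fun_prop]
lemma measurable_sgn : Measurable sgn :=
  Measurable.ite measurableSet_Ioi measurable_const <|
    Measurable.ite measurableSet_Iio measurable_const measurable_const

lemma walk_succ (f u : ℤ × ℤ → ℝ) (δ : ℝ) (n : ℕ) :
    walk f u δ (n + 1) =
      if 1 / 2 - δ * sgn (f (walk f u δ n, n)) ≤ u (walk f u δ n, n) then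
        walk f u δ n + 1 else walk f u δ n - 1 := rfl

lemma walk_reflect (f u : ℤ × ℤ → ℝ) (δ : ℝ) (hu : ∀ z, u z ≠ 1 / 2 - δ * sgn (f z))
    (n : ℕ) :
    walk (fun z => -f (-z.1, z.2)) (fun z => 1 - u (-z.1, z.2)) δ n = -walk f u δ n := by
  induction n with
  | zero => rfl
  | succ n ih =>
    set x := walk f u δ n
    have hflip : 1 / 2 - δ * sgn (-f (x, n)) ≤ 1 - u (x, n) ↔
        ¬ 1 / 2 - δ * sgn (f (x, n)) ≤ u (x, n) := by
      rw [sgn_neg, not_le, ← (hu (x, n)).le_iff_lt]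
      constructor <;> intro h <;> linarith
    simp only [walk_succ, ih, neg_neg, hflip]
    split_ifs <;> ring

lemma measurable_walk (δ : ℝ) :
    Measurable fun p : (ℤ × ℤ → ℝ) × (ℤ × ℤ → ℝ) => fun n => walk p.1 p.2 δ n := by
  refine measurable_pi_lambda _ fun n => ?_
  induction n with
  | zero => exact measurable_const
  | succ n ih =>
    have hstep : Measurable fun q : ((ℤ × ℤ → ℝ) × (ℤ × ℤ → ℝ)) × ℤ =>
        if 1 / 2 - δ * sgn (q.1.1 (q.2, n)) ≤ q.1.2 (q.2, n) then q.2 + 1 else q.2 - 1 :=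
      measurable_from_prod_countable_left fun x => by
        dsimp only
        exact Measurable.ite (measurableSet_le (by fun_prop) (by fun_prop))
          measurable_const measurable_const
    exact hstep.comp (measurable_id.prodMk ih)

lemma map_one_sub_volume_restrict_Icc :
    (volume.restrict (Set.Icc (0 : ℝ) 1)).map (fun x => 1 - x) =
      volume.restrict (Set.Icc 0 1) := by
  have h := (Measure.measurePreserving_sub_left volume (1 : ℝ)).restrict_preimage
    (measurableSet_Icc (a := (0 : ℝ)) (b := 1))
  rw [Set.preimage_const_sub_Icc, sub_zero, sub_self] at h
  exact h.map_eq

lemma infinitePi_const_map_comp_equiv {ι X : Type*} [MeasurableSpace X] (ν : Measure X)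
    [IsProbabilityMeasure ν] {φ : X → X} (hφ : Measurable φ) (hν : ν.map φ = ν) (e : ι ≃ ι) :
    (Measure.infinitePi fun _ : ι => ν).map (fun u i => φ (u (e i))) =
      Measure.infinitePi fun _ => ν := by
  have hreindex : (Measure.infinitePi fun _ : ι => ν).map (fun u i => u (e i)) =
      Measure.infinitePi fun _ => ν := by
    convert Measure.infinitePi_map_piCongrLeft (fun _ : ι => ν) e.symm using 2
    ext u i
    simp [MeasurableEquiv.coe_piCongrLeft, Equiv.piCongrLeft_apply_eq_cast]
  have hcomp :
      (fun (u : ι → X) i => φ (u (e i))) = (fun u i => φ (u i)) ∘ (fun u i => u (e i)) := rfl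
  rw [hcomp, ← Measure.map_map (by fun_prop) (by fun_prop), hreindex,
    Measure.infinitePi_map_pi (fun _ : ι => ν) (fun _ => hφ), hν]

lemma map_comp_eq_map_comp_of_invariant {Ω α β : Type*} [MeasurableSpace Ω] [MeasurableSpace α]
    [MeasurableSpace β] {P : Measure Ω} {X : Ω → α} {T : α → α} {g h : α → β}
    (hX : Measurable X) (hT : Measurable T) (hg : Measurable g)
    (hinv : (P.map X).map T = P.map X) (hgh : ∀ᵐ ω ∂P, g (T (X ω)) = h (X ω)) :
    P.map (fun ω => g (X ω)) = P.map (fun ω => h (X ω)) :=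
  calc P.map (g ∘ X) = ((P.map X).map T).map g := by rw [hinv, Measure.map_map hg hX]
    _ = P.map (g ∘ T ∘ X) := by rw [Measure.map_map hT hX, Measure.map_map hg (hT.comp hX)]
    _ = P.map (h ∘ X) := Measure.map_congr hgh

theorem walk_reflection_symmetry_general
    (μ : Measure ((ℤ × ℤ) → ℝ)) [IsProbabilityMeasure μ]
    (hR : SignReversingReflectionInvariant μ)
    (δ : ℝ)
    (Ω : Type) [MeasurableSpace Ω] (P : Measure Ω) [IsProbabilityMeasure P]
    (F U : Ω → (ℤ × ℤ) → ℝ)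
    (hF : Measurable F) (hU : Measurable U)
    (hFlaw : Measure.map F P = μ)
    (hUunif : ∀ z : ℤ × ℤ,
      Measure.map (fun ω => U ω z) P = volume.restrict (Set.Icc 0 1))
    (hUindep : iIndepFun (fun z ω => U ω z) P)
    (hFU : IndepFun F U P) :
    Measure.map (fun ω (n : ℕ) => walk (F ω) (U ω) δ n) P =
      Measure.map (fun ω (n : ℕ) => -walk (F ω) (U ω) δ n) P := by
  set ν := volume.restrict (Set.Icc (0 : ℝ) 1)
  have : IsProbabilityMeasure ν := ⟨by simp [ν]⟩
  have hUz : ∀ z, Measurable fun ω => U ω z := fun z => (measurable_pi_apply z).comp hU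
  have hlawU : P.map U = Measure.infinitePi fun _ => ν := by
    simpa [hUunif] using hUindep.map_fun_eq_infinitePi_map hUz
  have hinv : (P.map fun ω => (F ω, U ω)).map
      (Prod.map (fun f (z : ℤ × ℤ) => -f (-z.1, z.2)) (fun u z => 1 - u (-z.1, z.2))) =
      P.map fun ω => (F ω, U ω) := by
    rw [hFU.map_prod_eq_prod_map_map hF.aemeasurable hU.aemeasurable, hFlaw, hlawU,
      ← Measure.map_prod_map _ _ (by fun_prop) (by fun_prop), hR]
    exact congrArg μ.prod <| infinitePi_const_map_comp_equiv ν (by fun_prop)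
      map_one_sub_volume_restrict_Icc ((Equiv.neg ℤ).prodCongr (Equiv.refl ℤ))
  have hcrit : (Set.range fun t => 1 / 2 - δ * sgn t).Countable := by
    rw [← Function.comp_def (fun s => 1 / 2 - δ * s), Set.range_comp]
    exact (finite_range_sgn.image _).countable
  have hnoncrit : ∀ᵐ ω ∂P, ∀ z, U ω z ∉ Set.range fun t => 1 / 2 - δ * sgn t :=
    ae_all_iff.2 fun z => ae_of_ae_map (hUz z).aemeasurable <| by
      rw [hUunif z]; exact hcrit.ae_notMem ν
  refine map_comp_eq_map_comp_of_invariant (g := fun p n => walk p.1 p.2 δ n)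
    (h := fun p n => -walk p.1 p.2 δ n) (hF.prodMk hU) (by fun_prop) (measurable_walk δ)
    hinv ?_
  filter_upwards [hnoncrit] with ω hω
  funext n
  exact walk_reflect _ _ δ (fun z hz => hω z ⟨F ω z, hz.symm⟩) n

/-- Distributional reflection symmetry of the walk: under the annealed law, `(X_n)` and
`(-X_n)` have the same distribution. -/
theorem walk_reflection_symmetry
    (μ : Measure ((ℤ × ℤ) → ℝ)) [IsProbabilityMeasure μ]
    (hR : SignReversingReflectionInvariant μ)
    (δ : ℝ) (hδ : δ ∈ Set.Icc 0 (1 / 2 : ℝ))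
    (Ω : Type) [MeasurableSpace Ω] (P : Measure Ω) [IsProbabilityMeasure P]
    (F U : Ω → (ℤ × ℤ) → ℝ)
    (hF : Measurable F) (hU : Measurable U)
    (hFlaw : Measure.map F P = μ)
    (hUunif : ∀ z : ℤ × ℤ,
      Measure.map (fun ω => U ω z) P = volume.restrict (Set.Icc 0 1))
    (hUindep : iIndepFun (fun z ω => U ω z) P)
    (hFU : IndepFun F U P) :
    Measure.map (fun ω (n : ℕ) => walk (F ω) (U ω) δ n) P =
      Measure.map (fun ω (n : ℕ) => -walk (F ω) (U ω) δ n) P :=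
  walk_reflection_symmetry_general μ hR δ Ω P F U hF hU hFlaw hUunif hUindep hFU
end
end

section
/- Let c₀ > 0 and β > 2. There exists a constant c₁ > 0, depending only on c₀ and β, such that for every q : ℤ² → ℝ with 0 ≤ q(x) ≤ c₀·‖x‖₁^{−β} for all x ≠ 0 and q(0) ≤ c₀, and for every x ∈ ℤ² with x ≠ 0, one has (q*q)(x) = ∑_{z∈ℤ²} q(x−z)·q(z) ≤ c₁·‖x‖₁^{−β+2}. -/
noncomputable section

/-- The ℓ¹ norm on ℤ², as a real number. -/
def norm1 (x : ℤ × ℤ) : ℝ := ((|x.1| + |x.2| : ℤ) : ℝ)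

lemma norm1_nonneg (x : ℤ × ℤ) : 0 ≤ norm1 x := by
  unfold norm1; positivity

lemma one_le_norm1 {x : ℤ × ℤ} (hx : x ≠ 0) : 1 ≤ norm1 x := by
  have h : x.1 ≠ 0 ∨ x.2 ≠ 0 := by
    by_contra h; push_neg at h; exact hx (Prod.ext h.1 h.2)
  have h1 : (1:ℤ) ≤ |x.1| + |x.2| := by
    rcases h with h | h
    · have := Int.one_le_abs h; linarith [abs_nonneg x.2]
    · have := Int.one_le_abs h; linarith [abs_nonneg x.1]
  unfold norm1; exact_mod_cast h1

lemma norm1_zero : norm1 0 = 0 := by simp [norm1]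

lemma norm1_triangle (x z : ℤ × ℤ) : norm1 x ≤ norm1 (x - z) + norm1 z := by
  have h1 : |x.1| ≤ |x.1 - z.1| + |z.1| := by
    simpa using abs_add_le (x.1 - z.1) z.1
  have h2 : |x.2| ≤ |x.2 - z.2| + |z.2| := by
    simpa using abs_add_le (x.2 - z.2) z.2
  have h : (|x.1| + |x.2| : ℤ) ≤ (|x.1 - z.1| + |x.2 - z.2|) + (|z.1| + |z.2|) := by linarith
  unfold norm1
  simp only [Prod.fst_sub, Prod.snd_sub]
  exact_mod_cast h

lemma abs_fst_le_norm1 (x : ℤ × ℤ) : |(x.1 : ℝ)| ≤ norm1 x := by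
  unfold norm1; push_cast; linarith [abs_nonneg ((x.2:ℝ)), abs_nonneg ((x.1 : ℝ))]

lemma abs_snd_le_norm1 (x : ℤ × ℤ) : |(x.2 : ℝ)| ≤ norm1 x := by
  unfold norm1; push_cast; linarith [abs_nonneg ((x.1:ℝ)), abs_nonneg ((x.2 : ℝ))]

/-- Equation (6.5): a nonnegative kernel with polynomial decay of exponent `β > 2` has
convolution square decaying with exponent `β - 2`. -/
theorem convolution_square_decay (c₀ β : ℝ) (hc₀ : 0 < c₀) (hβ : 2 < β) :
    ∃ c₁ : ℝ, 0 < c₁ ∧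
      ∀ q : ℤ × ℤ → ℝ,
        (∀ x, 0 ≤ q x) →
        (∀ x : ℤ × ℤ, x ≠ 0 → q x ≤ c₀ * norm1 x ^ (-β)) →
        q 0 ≤ c₀ →
        ∀ x : ℤ × ℤ, x ≠ 0 →
          (∑' z : ℤ × ℤ, q (x - z) * q z) ≤ c₁ * norm1 x ^ (-β + 2) := by
  have hβ2 : (1:ℝ) < β / 2 := by linarith
  set g : ℤ → ℝ := fun a => if a = 0 then 1 else |(a:ℝ)| ^ (-(β/2)) with hg_def
  have hg_nonneg : ∀ a, 0 ≤ g a := by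
    intro a; simp only [hg_def]; split_ifs <;> positivity
  have hg : Summable g := by
    apply Summable.of_nonneg_of_le hg_nonneg
      (f := fun a : ℤ => |(a:ℝ)| ^ (-(β/2)) + (if a = 0 then 1 else 0))
    · intro a
      simp only [hg_def]
      split_ifs with h
      · subst h
        rw [show |((0:ℤ):ℝ)| = 0 by simp, Real.zero_rpow (by linarith)]
        norm_num
      · simp
    · exact (Real.summable_abs_int_rpow hβ2).add
        (summable_of_ne_finset_zero (s := {0}) (by intro a ha; simp at ha; simp [ha]))
  set G : ℤ × ℤ → ℝ := fun z => g z.1 * g z.2 with hG_def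
  have hG_nonneg : ∀ z, 0 ≤ G z := fun z => mul_nonneg (hg_nonneg _) (hg_nonneg _)
  have hG : Summable G := hg.mul_of_nonneg hg hg_nonneg hg_nonneg
  set T : ℝ := ∑' z, G z with hT_def
  have hG0 : G 0 = 1 := by simp [hG_def, hg_def]
  have hT1 : 1 ≤ T := by
    rw [← hG0]
    exact Summable.le_tsum hG 0 (fun j _ => hG_nonneg j)
  -- comparison : norm1 z ^ (-β) ≤ G z for z ≠ 0
  have hcomp : ∀ z : ℤ × ℤ, z ≠ 0 → norm1 z ^ (-β) ≤ G z := by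
    intro z hz
    have hn1 : 1 ≤ norm1 z := one_le_norm1 hz
    have hnpos : 0 < norm1 z := by linarith
    by_cases h1 : z.1 = 0
    · have h2 : z.2 ≠ 0 := by
        intro h2; exact hz (Prod.ext h1 h2)
      have hn : norm1 z = |(z.2 : ℝ)| := by unfold norm1; rw [h1]; push_cast; simp
      simp only [hG_def, hg_def, if_pos h1, if_neg h2, one_mul]
      rw [hn]
      exact Real.rpow_le_rpow_of_exponent_le (hn ▸ hn1) (by linarith)
    · by_cases h2 : z.2 = 0
      · have hn : norm1 z = |(z.1 : ℝ)| := by unfold norm1; rw [h2]; push_cast; simp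
        simp only [hG_def, hg_def, if_neg h1, if_pos h2, mul_one]
        rw [hn]
        exact Real.rpow_le_rpow_of_exponent_le (hn ▸ hn1) (by linarith)
      · have ha1 : (0:ℝ) < |(z.1 : ℝ)| := by
          simp only [abs_pos]; exact_mod_cast h1
        have ha2 : (0:ℝ) < |(z.2 : ℝ)| := by
          simp only [abs_pos]; exact_mod_cast h2
        have key : norm1 z ^ (-β) = norm1 z ^ (-(β/2)) * norm1 z ^ (-(β/2)) := by
          rw [← Real.rpow_add hnpos]; ring_nf
        rw [key]
        simp only [hG_def, hg_def, if_neg h1, if_neg h2]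
        exact mul_le_mul
          (Real.rpow_le_rpow_of_nonpos ha1 (abs_fst_le_norm1 z) (by linarith))
          (Real.rpow_le_rpow_of_nonpos ha2 (abs_snd_le_norm1 z) (by linarith))
          (by positivity) (by positivity)
  have h2pow : (0:ℝ) < (2:ℝ) ^ (β - 2) := Real.rpow_pos_of_pos (by norm_num) _
  refine ⟨2 * c₀ ^ 2 * (2:ℝ) ^ (β - 2) * T, by positivity, ?_⟩
  intro q hq0 hqd hq00 x hx
  have hn1 : 1 ≤ norm1 x := one_le_norm1 hx
  have hnpos : 0 < norm1 x := by linarith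
  -- q is dominated by c₀ * G
  have hqG : ∀ z, q z ≤ c₀ * G z := by
    intro z
    by_cases hz : z = 0
    · subst hz; rw [hG0, mul_one]; exact hq00
    · exact (hqd z hz).trans (by
        have := hcomp z hz
        nlinarith [Real.rpow_nonneg (norm1_nonneg z) (-β)])
  have hqs : Summable q := Summable.of_nonneg_of_le hq0 hqG (hG.mul_left c₀)
  have hqb : ∀ z, q z ≤ c₀ := by
    intro z
    by_cases hz : z = 0
    · subst hz; exact hq00
    · refine (hqd z hz).trans ?_
      have h1 : norm1 z ^ (-β) ≤ 1 :=
        Real.rpow_le_one_of_one_le_of_nonpos (one_le_norm1 hz) (by linarith)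
      nlinarith
  have hshift : Summable (fun z => q (x - z)) := (Equiv.subLeft x).summable_iff.mpr hqs
  have hshift_tsum : (∑' z, q (x - z)) = ∑' z, q z := (Equiv.subLeft x).tsum_eq q
  set S : ℝ := ∑' z, q z with hS_def
  have hS_nonneg : 0 ≤ S := tsum_nonneg hq0
  have hST : S ≤ c₀ * T := by
    calc S ≤ ∑' z, c₀ * G z := Summable.tsum_le_tsum hqG hqs (hG.mul_left c₀)
    _ = c₀ * T := by rw [tsum_mul_left]
  set K : ℝ := c₀ * (2:ℝ) ^ (β - 2) * norm1 x ^ (-β + 2) with hK_def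
  have hK0 : 0 ≤ K := by positivity
  -- the half-norm bound : if norm1 x / 2 ≤ norm1 w and w ≠ 0 then q w ≤ K
  have hhalf : ∀ w : ℤ × ℤ, w ≠ 0 → norm1 x ≤ 2 * norm1 w → q w ≤ K := by
    intro w hw hw2
    have h1 : 1 ≤ norm1 w := one_le_norm1 hw
    have step1 : q w ≤ c₀ * norm1 w ^ (-β + 2) := by
      refine (hqd w hw).trans ?_
      have := Real.rpow_le_rpow_of_exponent_le h1 (show -β ≤ -β + 2 by linarith)
      nlinarith
    have step2 : norm1 w ^ (-β + 2) ≤ (norm1 x / 2) ^ (-β + 2) :=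
      Real.rpow_le_rpow_of_nonpos (by linarith) (by linarith) (by linarith)
    have step3 : (norm1 x / 2) ^ (-β + 2) = (2:ℝ) ^ (β - 2) * norm1 x ^ (-β + 2) := by
      rw [Real.div_rpow (norm1_nonneg x) (by norm_num), div_eq_mul_inv,
        ← Real.rpow_neg (by norm_num : (0:ℝ) ≤ 2)]
      rw [show -(-β + 2) = β - 2 by ring]
      ring
    rw [hK_def]
    calc q w ≤ c₀ * norm1 w ^ (-β + 2) := step1
      _ ≤ c₀ * ((2:ℝ) ^ (β - 2) * norm1 x ^ (-β + 2)) := by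
          rw [← step3]; nlinarith
      _ = c₀ * (2:ℝ) ^ (β - 2) * norm1 x ^ (-β + 2) := by ring
  -- pointwise bound
  have hpt : ∀ z, q (x - z) * q z ≤ K * (q (x - z) + q z) := by
    intro z
    by_cases hcase : norm1 x ≤ 2 * norm1 z
    · have hz : z ≠ 0 := by
        intro h; rw [h, norm1_zero] at hcase; linarith
      have := hhalf z hz hcase
      nlinarith [hq0 (x - z), hq0 z]
    · push_neg at hcase
      have htri := norm1_triangle x z
      have hw2 : norm1 x ≤ 2 * norm1 (x - z) := by linarith
      have hw : x - z ≠ 0 := by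
        intro h; rw [h, norm1_zero] at hw2; linarith
      have := hhalf (x - z) hw hw2
      nlinarith [hq0 (x - z), hq0 z]
  have hprod : Summable (fun z : ℤ × ℤ => q (x - z) * q z) := by
    apply Summable.of_nonneg_of_le (fun z => mul_nonneg (hq0 _) (hq0 _))
      (f := fun z => c₀ * q z)
    · intro z; exact mul_le_mul_of_nonneg_right (hqb _) (hq0 _)
    · exact hqs.mul_left c₀
  calc (∑' z : ℤ × ℤ, q (x - z) * q z)
      ≤ ∑' z, K * (q (x - z) + q z) :=
        Summable.tsum_le_tsum hpt hprod ((hshift.add hqs).mul_left K)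
    _ = K * ((∑' z, q (x - z)) + ∑' z, q z) := by
        rw [tsum_mul_left, Summable.tsum_add hshift hqs]
    _ = K * (2 * S) := by rw [hshift_tsum, ← hS_def]; ring
    _ ≤ K * (2 * (c₀ * T)) := by
        apply mul_le_mul_of_nonneg_left _ hK0; linarith
    _ = 2 * c₀ ^ 2 * (2:ℝ) ^ (β - 2) * T * norm1 x ^ (-β + 2) := by
        rw [hK_def]; ring
end
end

section
/- For every α > 2 there exists a constant c = c(α) > 0 such that for every rectangle R = [a,b] × [c,d] ⊂ ℝ² (with a ≤ b, c ≤ d) and every real r ≥ 1, ∫_{ℝ²} max{r, dist(u, R)}^{−α} du ≤ c · (Vol(R) + r·Per(R) + r²) · r^{−α}, where dist denotes Euclidean distance from the point u to the set R, Vol(R) = (b−a)(d−c), and Per(R) = 2((b−a) + (d−c)). -/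
/-!
Put `β = α / 2 > 1`. Since the distance from `u` to `R = [a, b] × [c, d]` dominates the distance
from each coordinate `uᵢ` to the corresponding side, `max(r, dist(u, R))^(-α)` is at most the
product of the one-dimensional functions `max(r, dist(uᵢ, [aᵢ, bᵢ]))^(-β)`. Each of these equals
`r^(-β)` on `[aᵢ - r, bᵢ + r]` and has two power tails `t^(-β)`, `t > r`, outside it, so its integral
is `(bᵢ - aᵢ + 2r + 2r/(β - 1)) r^(-β)`. Fubini turns the product bound into the product of these
two integrals, which is `O((Vol(R) + r Per(R) + r²) r^(-α))`. The same argument works for boxes in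
any dimension `n`, with `β = α / n`.
-/

open MeasureTheory Metric Set

noncomputable section

theorem Metric.infDist_le_infDist_of_mapsTo {X Y : Type*} [PseudoMetricSpace X]
    [PseudoMetricSpace Y] {f : X → Y} (hf : LipschitzWith 1 f) {s : Set X} {t : Set Y}
    (hst : MapsTo f s t) (hs : s.Nonempty) (x : X) : infDist (f x) t ≤ infDist x s :=
  (le_infDist hs).2 fun y hy => (infDist_le_dist_of_mem (hst hy)).trans <| by
    simpa using hf.dist_le_mul x y

theorem EuclideanSpace.lipschitzWith_apply {ι : Type*} [Fintype ι] (i : ι) :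
    LipschitzWith 1 fun v : EuclideanSpace ℝ ι => v i :=
  LipschitzWith.of_dist_le_mul fun v w => by simpa using PiLp.dist_apply_le v w i

theorem EuclideanSpace.integrable_prod_apply {ι : Type*} [Fintype ι] {f : ι → ℝ → ℝ}
    (hf : ∀ i, Integrable (f i)) : Integrable fun x : EuclideanSpace ℝ ι => ∏ i, f i (x i) :=
  ((PiLp.volume_preserving_ofLp ι).integrable_comp_emb
    (MeasurableEquiv.toLp 2 (ι → ℝ)).symm.measurableEmbedding).2 (Integrable.fintype_prod hf)

theorem EuclideanSpace.integral_prod_apply {ι : Type*} [Fintype ι] (f : ι → ℝ → ℝ) :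
    ∫ x : EuclideanSpace ℝ ι, ∏ i, f i (x i) = ∏ i, ∫ t, f i t :=
  ((PiLp.volume_preserving_ofLp ι).integral_comp
    (MeasurableEquiv.toLp 2 (ι → ℝ)).symm.measurableEmbedding
    fun x : ι → ℝ => ∏ i, f i (x i)).trans (integral_fintype_prod_volume_eq_prod f)

def powTail (β r t : ℝ) : ℝ := (Ioi r).indicator (fun t => t ^ (-β)) t

/-- `max(r, dist(x, [a, b]))^(-β)`, written as a plateau on `[a - r, b + r]` plus two power tails. -/
def intervalMajorant (β r a b x : ℝ) : ℝ :=
  (Icc (a - r) (b + r)).indicator (fun _ => r ^ (-β)) x + powTail β r (a - x) + powTail β r (x - b)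

section Majorant

variable {β r : ℝ}

theorem integrable_powTail (hβ : 1 < β) (hr : 0 < r) : Integrable (powTail β r) :=
  (integrable_indicator_iff measurableSet_Ioi).2 (integrableOn_Ioi_rpow_of_lt (by linarith) hr)

theorem integral_powTail (hβ : 1 < β) (hr : 0 < r) :
    ∫ t, powTail β r t = r * r ^ (-β) / (β - 1) := by
  unfold powTail
  rw [integral_indicator measurableSet_Ioi, integral_Ioi_rpow_of_lt (by linarith) hr,
    Real.rpow_add hr, Real.rpow_one, show -β + 1 = -(β - 1) by ring, neg_div_neg_eq]
  ring

theorem integrable_intervalMajorant (hβ : 1 < β) (hr : 0 < r) (a b : ℝ) :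
    Integrable (intervalMajorant β r a b) :=
  (((integrable_indicator_iff measurableSet_Icc).2 (integrableOn_const measure_Icc_lt_top.ne)).add
    ((integrable_powTail hβ hr).comp_sub_left a)).add ((integrable_powTail hβ hr).comp_sub_right b)

theorem integral_intervalMajorant (hβ : 1 < β) (hr : 0 < r) {a b : ℝ} (hab : a ≤ b) :
    ∫ x, intervalMajorant β r a b x = (b - a + (2 + 2 / (β - 1)) * r) * r ^ (-β) := by
  have hplateau : Integrable ((Icc (a - r) (b + r)).indicator fun _ => r ^ (-β)) :=
    (integrable_indicator_iff measurableSet_Icc).2 (integrableOn_const measure_Icc_lt_top.ne)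
  have htail := integrable_powTail hβ hr
  change ∫ x, ((Icc (a - r) (b + r)).indicator (fun _ => r ^ (-β)) + (fun x => powTail β r (a - x))
    + fun x => powTail β r (x - b)) x = _
  rw [integral_add' (hplateau.add (htail.comp_sub_left a)) (htail.comp_sub_right b),
    integral_add' hplateau (htail.comp_sub_left a), integral_indicator_const _ measurableSet_Icc,
    integral_sub_left_eq_self, integral_sub_right_eq_self, integral_powTail hβ hr,
    Real.volume_real_Icc_of_le (by linarith), smul_eq_mul]
  ring

theorem rpow_neg_max_infDist_Icc_le_intervalMajorant (hβ : 0 ≤ β) (hr : 0 < r) {a b : ℝ}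
    (hab : a ≤ b) (x : ℝ) :
    max r (infDist x (Icc a b)) ^ (-β) ≤ intervalMajorant β r a b x := by
  have hne : (Icc a b).Nonempty := nonempty_Icc.2 hab
  have hleft : a - x ≤ infDist x (Icc a b) := (le_infDist hne).2 fun y hy => by
    rw [Real.dist_eq]; linarith [hy.1, neg_abs_le (x - y)]
  have hright : x - b ≤ infDist x (Icc a b) := (le_infDist hne).2 fun y hy => by
    rw [Real.dist_eq]; linarith [hy.2, le_abs_self (x - y)]
  have hanti : ∀ {s t : ℝ}, 0 < s → s ≤ t → t ^ (-β) ≤ s ^ (-β) := fun hs hst =>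
    Real.rpow_le_rpow_of_nonpos hs hst (neg_nonpos.2 hβ)
  unfold intervalMajorant powTail
  rcases lt_or_ge x (a - r) with hx | hx
  · rw [indicator_of_notMem (notMem_Icc_of_lt hx), indicator_of_mem (by simp; linarith),
      indicator_of_notMem (by simp; linarith)]
    simpa using hanti (by linarith) (le_max_of_le_right hleft)
  rcases le_or_gt x (b + r) with hx' | hx'
  · rw [indicator_of_mem (mem_Icc.2 ⟨hx, hx'⟩), indicator_of_notMem (by simp; linarith),
      indicator_of_notMem (by simp; linarith)]
    simpa using hanti hr (le_max_left _ _)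
  · rw [indicator_of_notMem (notMem_Icc_of_gt hx'), indicator_of_notMem (by simp; linarith),
      indicator_of_mem (by simp; linarith)]
    simpa using hanti (by linarith) (le_max_of_le_right hright)

end Majorant

theorem integral_rpow_neg_max_infDist_box_le {ι : Type*} [Fintype ι] [Nonempty ι]
    {a b : ι → ℝ} (hab : a ≤ b) {α r : ℝ} (hα : Fintype.card ι < α) (hr : 0 < r) :
    ∫ u : EuclideanSpace ℝ ι, max r (infDist u {v | ∀ i, v i ∈ Icc (a i) (b i)}) ^ (-α) ≤
      (∏ i, (b i - a i + (2 + 2 / (α / Fintype.card ι - 1)) * r)) * r ^ (-α) := by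
  set n : ℕ := Fintype.card ι
  set β := α / n
  have hn : (0 : ℝ) < n := Nat.cast_pos.2 Fintype.card_pos
  have hβ : 1 < β := (one_lt_div hn).2 hα
  have hpow : ∀ M : ℝ, 0 < M → M ^ (-α) = ∏ _i : ι, M ^ (-β) := fun M hM => by
    rw [Finset.prod_const, Finset.card_univ, ← Real.rpow_natCast, ← Real.rpow_mul hM.le]
    rw [neg_mul]
    exact congrArg _ (congrArg Neg.neg (div_mul_cancel₀ α hn.ne').symm)
  set box := {v : EuclideanSpace ℝ ι | ∀ i, v i ∈ Icc (a i) (b i)}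
  have hbox : box.Nonempty := ⟨WithLp.toLp 2 a, fun i => ⟨le_rfl, hab i⟩⟩
  have hpointwise : ∀ u : EuclideanSpace ℝ ι, max r (infDist u box) ^ (-α) ≤
      ∏ i, intervalMajorant β r (a i) (b i) (u i) := fun u => by
    rw [hpow _ (lt_max_of_lt_left hr)]
    refine Finset.prod_le_prod (fun _ _ => by positivity) fun i _ => ?_
    have hproj : infDist (u i) (Icc (a i) (b i)) ≤ infDist u box :=
      infDist_le_infDist_of_mapsTo (EuclideanSpace.lipschitzWith_apply i)
        (fun _ hv => by exact hv i) hbox u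
    calc max r (infDist u box) ^ (-β)
        ≤ max r (infDist (u i) (Icc (a i) (b i))) ^ (-β) :=
          Real.rpow_le_rpow_of_nonpos (by positivity) (max_le_max le_rfl hproj) (by linarith)
      _ ≤ intervalMajorant β r (a i) (b i) (u i) :=
          rpow_neg_max_infDist_Icc_le_intervalMajorant (by linarith) hr (hab i) _
  calc _ ≤ ∫ u : EuclideanSpace ℝ ι, ∏ i, intervalMajorant β r (a i) (b i) (u i) :=
        integral_mono_of_nonneg (.of_forall fun _ => by positivity)
          (EuclideanSpace.integrable_prod_apply fun i => integrable_intervalMajorant hβ hr _ _)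
          (.of_forall hpointwise)
    _ = ∏ i, (b i - a i + (2 + 2 / (β - 1)) * r) * r ^ (-β) := by
        rw [EuclideanSpace.integral_prod_apply]
        exact Finset.prod_congr rfl fun i _ => integral_intervalMajorant hβ hr (hab i)
    _ = _ := by rw [Finset.prod_mul_distrib, ← hpow r hr]

/-- The key analytic estimate of Lemma 6.4: for `α > 2`, the integral over the plane of
`max(r, dist(u, R))^(-α)` is at most `c (Vol(R) + r Per(R) + r²) r^(-α)` for any
rectangle `R` and any `r ≥ 1`. -/
theorem integral_max_dist_rect_bound (α : ℝ) (hα : 2 < α) :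
    ∃ c : ℝ, 0 < c ∧
      ∀ a b c' d : ℝ, a ≤ b → c' ≤ d → ∀ r : ℝ, 1 ≤ r →
        (∫ u : EuclideanSpace ℝ (Fin 2),
            (max r (Metric.infDist u
              {v : EuclideanSpace ℝ (Fin 2) |
                v 0 ∈ Set.Icc a b ∧ v 1 ∈ Set.Icc c' d})) ^ (-α)) ≤
          c * ((b - a) * (d - c') + r * (2 * ((b - a) + (d - c'))) + r ^ 2) *
            r ^ (-α) := by
  set C : ℝ := 2 + 2 / (α / 2 - 1)
  have hC : 1 ≤ C := by
    have : 0 < 2 / (α / 2 - 1) := div_pos two_pos (by linarith)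
    linarith
  refine ⟨C ^ 2, by positivity, fun a b c' d hab hcd r hr => ?_⟩
  have hbox := integral_rpow_neg_max_infDist_box_le (a := ![a, c']) (b := ![b, d])
    (fun i => by fin_cases i <;> simpa) (α := α) (by simpa using hα) (by linarith : (0 : ℝ) < r)
  simp only [Fin.forall_fin_two, Fin.prod_univ_two, Fintype.card_fin] at hbox
  refine hbox.trans (mul_le_mul_of_nonneg_right ?_ (by positivity))
  simp only [Matrix.cons_val_zero, Matrix.cons_val_one]
  have hA : 0 ≤ b - a := by linarith
  have hB : 0 ≤ d - c' := by linarith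
  nlinarith [mul_nonneg (mul_nonneg hA hB) (by nlinarith : (0 : ℝ) ≤ C ^ 2 - 1),
    mul_nonneg (mul_nonneg hA (by linarith : (0 : ℝ) ≤ r)) (by nlinarith : (0 : ℝ) ≤ 2 * C ^ 2 - C),
    mul_nonneg (mul_nonneg hB (by linarith : (0 : ℝ) ≤ r)) (by nlinarith : (0 : ℝ) ≤ 2 * C ^ 2 - C)]
end
end
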